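/- arXiv:2404.16353 — 11 statements merged into one kernel-verified Lean document; each statement's English description precedes it below -/
import Mathlib

section
/- For every real l > 0 (in particular every positive integer l), there exists λ₀ > l² such that E(λ₀, l) = 0, i.e. (√λ₀ − l)/(√λ₀ + 1) + (l − √(λ₀ + l²))/(√(λ₀ + l²) + √(1 + l²)) = 0. -/
/-- The boundary evolution function `E(λ, l)` for the Hele-Shaw tumor growth model. -/
noncomputable def E (G0 cB lam l : ℝ) : ℝ :=
  (G0 * cB / Real.sqrt lam) *
    ((Real.sqrt lam - l) / (Real.sqrt lam + 1) +
      (l - Real.sqrt (lam + l ^ 2)) / (Real.sqrt (lam + l ^ 2) + Real.sqrt (1 + l ^ 2)))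

theorem stmt_1 (G0 cB l : ℝ) (hG0 : 0 < G0) (hcB : 0 < cB) (hl : 0 < l) :
    ∃ lam0 : ℝ, l ^ 2 < lam0 ∧ E G0 cB lam0 l = 0 ∧
      (Real.sqrt lam0 - l) / (Real.sqrt lam0 + 1) +
        (l - Real.sqrt (lam0 + l ^ 2)) / (Real.sqrt (lam0 + l ^ 2) + Real.sqrt (1 + l ^ 2))
        = 0 := by
  have hb2 : (Real.sqrt (1 + l ^ 2)) ^ 2 = 1 + l ^ 2 := Real.sq_sqrt (by positivity)
  have hb0 : 0 ≤ Real.sqrt (1 + l ^ 2) := Real.sqrt_nonneg _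
  set b := Real.sqrt (1 + l ^ 2) with hbdef
  have hb1 : 1 ≤ b := by nlinarith
  have hbl : b ≤ 1 + l := by nlinarith
  set g : ℝ → ℝ := fun x => (Real.sqrt x - l) / (Real.sqrt x + 1) +
    (l - Real.sqrt (x + l ^ 2)) / (Real.sqrt (x + l ^ 2) + b) with hgdef
  -- continuity of g
  have hgc : Continuous g := by
    have hc1 : Continuous fun x : ℝ => Real.sqrt (x + l ^ 2) :=
      Real.continuous_sqrt.comp (continuous_id.add continuous_const)
    apply Continuous.add
    · exact (Real.continuous_sqrt.sub continuous_const).div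
        (Real.continuous_sqrt.add continuous_const)
        (fun x => by positivity)
    · refine (continuous_const.sub hc1).div (hc1.add continuous_const) (fun x => ?_)
      have := Real.sqrt_nonneg (x + l ^ 2)
      positivity
  -- right endpoint
  set s0 : ℝ := (1 + 2 * l) * (2 + l) / l with hs0def
  have hs0pos : 0 < s0 := by positivity
  have hs0l : s0 * l = (1 + 2 * l) * (2 + l) := div_mul_cancel₀ _ hl.ne'
  have hls0 : l < s0 := by
    rw [hs0def, lt_div_iff₀ hl]; nlinarith
  set M : ℝ := s0 ^ 2 with hMdef
  have hlM : l ^ 2 < M := by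
    rw [hMdef]; nlinarith
  -- g (l^2) < 0
  have hgneg : g (l ^ 2) < 0 := by
    have hsq : Real.sqrt (l ^ 2) = l := Real.sqrt_sq hl.le
    have hu2 : (Real.sqrt (l ^ 2 + l ^ 2)) ^ 2 = l ^ 2 + l ^ 2 := Real.sq_sqrt (by positivity)
    have hu0 : 0 ≤ Real.sqrt (l ^ 2 + l ^ 2) := Real.sqrt_nonneg _
    have hul : l < Real.sqrt (l ^ 2 + l ^ 2) := by nlinarith
    have h1 : (Real.sqrt (l ^ 2) - l) / (Real.sqrt (l ^ 2) + 1) = 0 := by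
      rw [hsq]; simp
    have h2 : (l - Real.sqrt (l ^ 2 + l ^ 2)) / (Real.sqrt (l ^ 2 + l ^ 2) + b) < 0 := by
      apply div_neg_of_neg_of_pos <;> nlinarith
    simp only [hgdef]
    rw [h1]
    linarith
  -- g M > 0
  have hgpos : 0 < g M := by
    have hsqM : Real.sqrt M = s0 := by rw [hMdef]; exact Real.sqrt_sq hs0pos.le
    have ht2 : (Real.sqrt (M + l ^ 2)) ^ 2 = s0 ^ 2 + l ^ 2 := by
      rw [hMdef]; exact Real.sq_sqrt (by positivity)
    have ht0 : 0 ≤ Real.sqrt (M + l ^ 2) := Real.sqrt_nonneg _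
    set t : ℝ := Real.sqrt (M + l ^ 2) with htdef
    have htl : t < s0 + l := by nlinarith
    have h1 : (l + b) * (b + 1) ≤ s0 * l := by nlinarith
    have h2 : l * (l + b) ≤ s0 * (b - 1) := by
      nlinarith [mul_le_mul_of_nonneg_right h1 hl.le]
    have hH : t * (1 + l) < (s0 + l) * (1 + l) :=
      mul_lt_mul_of_pos_right htl (by linarith)
    have key : 0 < (Real.sqrt M - l) * (t + b) + (Real.sqrt M + 1) * (l - t) := by
      rw [hsqM]; nlinarith
    have hd1 : Real.sqrt M + 1 ≠ 0 := by rw [hsqM]; positivity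
    have hd2 : t + b ≠ 0 := by positivity
    simp only [hgdef, ← htdef]
    rw [div_add_div _ _ hd1 hd2]
    apply div_pos key
    rw [hsqM]
    positivity
  -- IVT
  have hsub := intermediate_value_Icc hlM.le hgc.continuousOn
  obtain ⟨x, hxmem, hgx⟩ := hsub ⟨hgneg.le, hgpos.le⟩
  have hxne : x ≠ l ^ 2 := by
    intro h; rw [h] at hgx; linarith
  have hxgt : l ^ 2 < x := lt_of_le_of_ne hxmem.1 (Ne.symm hxne)
  have hsum : (Real.sqrt x - l) / (Real.sqrt x + 1) +
      (l - Real.sqrt (x + l ^ 2)) / (Real.sqrt (x + l ^ 2) + b) = 0 := hgx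
  refine ⟨x, hxgt, ?_, ?_⟩
  · unfold E
    rw [← hbdef, hsum, mul_zero]
  · exact hsum
end

section
/- For every real l > 0, the function λ ↦ E(λ, l) has exactly one zero on (0, ∞); that is, there exists a unique λ₀ > 0 with E(λ₀, l) = 0 (and this λ₀ satisfies λ₀ > l²). -/
lemma quad_uniq (a b c s1 s2 : ℝ) (ha : 0 < a) (hc : c < 0) (hs1 : 0 < s1)
    (hs2 : 0 < s2) (h1 : a * s1 ^ 2 + b * s1 + c = 0) (h2 : a * s2 ^ 2 + b * s2 + c = 0) :
    s1 = s2 := by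
  by_contra hne
  have hfac : (s1 - s2) * (a * (s1 + s2) + b) = 0 := by linear_combination h1 - h2
  have hsum : a * (s1 + s2) + b = 0 := by
    rcases mul_eq_zero.mp hfac with h | h
    · exact absurd (sub_eq_zero.mp h) hne
    · exact h
  have hprod : c = a * (s1 * s2) := by linear_combination h1 - s1 * hsum
  nlinarith [mul_pos hs1 hs2]

theorem stmt_2 (G0 cB l : ℝ) (hG0 : 0 < G0) (hcB : 0 < cB) (hl : 0 < l) :
    ∃ lam0 : ℝ, 0 < lam0 ∧ E G0 cB lam0 l = 0 ∧ l ^ 2 < lam0 ∧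
      ∀ lam : ℝ, 0 < lam → E G0 cB lam l = 0 → lam = lam0 := by
  have hB0 : (0:ℝ) ≤ 1 + l ^ 2 := by positivity
  set B := Real.sqrt (1 + l ^ 2) with hBdef
  have hB2 : B ^ 2 = 1 + l ^ 2 := Real.sq_sqrt hB0
  have hBnn : 0 ≤ B := Real.sqrt_nonneg _
  have hB1 : 1 < B := by nlinarith
  -- key reformulation of E = 0
  have key : ∀ lam : ℝ, 0 < lam →
      (E G0 cB lam l = 0 ↔
        Real.sqrt lam * (B + l) + l * (1 - B) = (l + 1) * Real.sqrt (lam + l ^ 2)) := by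
    intro lam hlam
    set s := Real.sqrt lam with hs
    set m := Real.sqrt (lam + l ^ 2) with hm
    have hs0 : 0 < s := Real.sqrt_pos.mpr hlam
    have hm0 : 0 < m := Real.sqrt_pos.mpr (by positivity)
    have hden : (0:ℝ) < s * (s + 1) * (m + B) := by positivity
    have hE : E G0 cB lam l =
        (G0 * cB / (s * (s + 1) * (m + B))) * (s * (B + l) + l * (1 - B) - (l + 1) * m) := by
      show (G0 * cB / s) * ((s - l) / (s + 1) + (l - m) / (m + B)) = _
      field_simp
      ring
    rw [hE]
    constructor
    · intro h
      rcases mul_eq_zero.mp h with h1 | h2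
      · exact absurd h1 (by positivity)
      · linarith [sub_eq_zero.mp h2]
    · intro h
      rw [show s * (B + l) + l * (1 - B) - (l + 1) * m = 0 from by rw [h]; ring, mul_zero]
  clear_value B
  -- quadratic consequence
  have quad : ∀ lam : ℝ, 0 < lam → E G0 cB lam l = 0 →
      (l ^ 2 + 2 * l * (B - 1)) * Real.sqrt lam ^ 2 +
        (2 * l * (B - 1 - l ^ 2 + l - l * B)) * Real.sqrt lam +
        l ^ 2 * ((1 - B) ^ 2 - (l + 1) ^ 2) = 0 := by
    intro lam hlam hE
    have h := (key lam hlam).mp hE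
    have hs2 : Real.sqrt lam ^ 2 = lam := Real.sq_sqrt hlam.le
    have hm2 : Real.sqrt (lam + l ^ 2) ^ 2 = lam + l ^ 2 := Real.sq_sqrt (by positivity)
    have hsq : (Real.sqrt lam * (B + l) + l * (1 - B)) ^ 2 = (l + 1) ^ 2 * (lam + l ^ 2) := by
      rw [h, mul_pow, hm2]
    set s := Real.sqrt lam
    linear_combination hsq + (2 * l * s - lam) * hB2 - (B ^ 2 + 2 * l * B + l ^ 2) * hs2 +
      (l ^ 2 + 2 * l * (B - 1)) * hs2
  have ha : 0 < l ^ 2 + 2 * l * (B - 1) := by nlinarith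
  have hc : l ^ 2 * ((1 - B) ^ 2 - (l + 1) ^ 2) < 0 := by nlinarith
  -- existence via IVT
  set g : ℝ → ℝ := fun x => Real.sqrt x * (B + l) + l * (1 - B) - (l + 1) * Real.sqrt (x + l ^ 2)
    with hgdef
  have hgcont : Continuous g := by
    apply Continuous.sub
    · exact (Real.continuous_sqrt.mul continuous_const).add continuous_const
    · exact continuous_const.mul (Real.continuous_sqrt.comp (continuous_id.add continuous_const))
  set t : ℝ := l + (l ^ 2 + l * B) / (B - 1) + 1 with htdef
  clear_value t
  have hB1' : (0:ℝ) < B - 1 := by linarith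
  have ht : l < t := by
    have : 0 ≤ (l ^ 2 + l * B) / (B - 1) := div_nonneg (by positivity) hB1'.le
    linarith
  have ht0 : 0 < t := lt_trans hl ht
  have hll : l ^ 2 ≤ t ^ 2 := by nlinarith
  have hglow : g (l ^ 2) < 0 := by
    have h1 : Real.sqrt (l ^ 2) = l := Real.sqrt_sq hl.le
    have h2 : Real.sqrt (l ^ 2 + l ^ 2) = Real.sqrt 2 * l := by
      rw [show l ^ 2 + l ^ 2 = 2 * l ^ 2 by ring, Real.sqrt_mul (by norm_num), Real.sqrt_sq hl.le]
    have h3 : 1 < Real.sqrt 2 := by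
      nlinarith [Real.sq_sqrt (by norm_num : (0:ℝ) ≤ 2), Real.sqrt_nonneg 2]
    simp only [hgdef, h1, h2]
    nlinarith
  have hghigh : 0 < g (t ^ 2) := by
    have h1 : Real.sqrt (t ^ 2) = t := Real.sqrt_sq ht0.le
    have h2 : Real.sqrt (t ^ 2 + l ^ 2) ≤ t + l := by
      rw [show t ^ 2 + l ^ 2 = (t + l) ^ 2 - 2 * t * l by ring]
      calc Real.sqrt ((t + l) ^ 2 - 2 * t * l) ≤ Real.sqrt ((t + l) ^ 2) := by
            apply Real.sqrt_le_sqrt; nlinarith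
        _ = t + l := Real.sqrt_sq (by positivity)
    have h3 : (B - 1) * t = (B - 1) * (l + 1) + (l ^ 2 + l * B) := by
      rw [htdef]
      field_simp
      ring
    simp only [hgdef, h1]
    nlinarith [h2, h3]
  obtain ⟨lam0, hlam0mem, hlam0g⟩ :=
    intermediate_value_Icc hll hgcont.continuousOn ⟨hglow.le, hghigh.le⟩
  have hlam0lb : l ^ 2 ≤ lam0 := hlam0mem.1
  have hlam0pos : 0 < lam0 := lt_of_lt_of_le (by positivity) hlam0lb
  have hlam0ne : lam0 ≠ l ^ 2 := by
    intro h; rw [h] at hlam0g; rw [hlam0g] at hglow; exact lt_irrefl 0 hglow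
  have hEzero : E G0 cB lam0 l = 0 := by
    rw [key lam0 hlam0pos]
    have : g lam0 = 0 := hlam0g
    simp only [hgdef] at this
    linarith
  refine ⟨lam0, hlam0pos, hEzero, lt_of_le_of_ne hlam0lb (Ne.symm hlam0ne), ?_⟩
  -- uniqueness
  have uniq : ∀ lam1 lam2 : ℝ, 0 < lam1 → 0 < lam2 →
      E G0 cB lam1 l = 0 → E G0 cB lam2 l = 0 → lam1 = lam2 := by
    intro lam1 lam2 h1 h2 hE1 hE2
    have q1 := quad lam1 h1 hE1
    have q2 := quad lam2 h2 hE2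
    have hs10 : 0 < Real.sqrt lam1 := Real.sqrt_pos.mpr h1
    have hs20 : 0 < Real.sqrt lam2 := Real.sqrt_pos.mpr h2
    have hseq := quad_uniq _ _ _ _ _ ha hc hs10 hs20 q1 q2
    have e1 : lam1 = Real.sqrt lam1 ^ 2 := (Real.sq_sqrt h1.le).symm
    have e2 : lam2 = Real.sqrt lam2 ^ 2 := (Real.sq_sqrt h2.le).symm
    rw [e1, e2, hseq]
  intro lam hlam hE
  exact uniq lam lam0 hlam hlam0pos hE hEzero
end

section
/- For every fixed real l > 0, one has the asymptotic behavior lim_{x→0⁺} E(1/x², l)/x² = G₀·c_B·(√(1 + l²) − 1); in particular E(λ, l) → 0 as λ → +∞ and E(λ, l) > 0 for all sufficiently large λ. -/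
/-!
Substituting `λ = 1 / x²`, so that `√λ = 1 / x` and `√(λ + l²) = √(1 + l² x²) / x`, and clearing
denominators gives `E(1 / x², l) = x² F(x)` with `F` continuous at `0` and
`F(0) = G₀ c_B (√(1 + l²) - 1)`. Everything then follows by continuity, since `x = 1 / √λ → 0⁺`
as `λ → ∞`, and `F(0) > 0` because `l ≠ 0`.
-/

open Filter Topology

/-- `E(1 / x², l) / x²`, with the singularity at `x = 0` removed. -/
noncomputable def rescaledE (G0 cB l x : ℝ) : ℝ :=
  G0 * cB * (-(l + 1) / (1 + x) +
    (l + Real.sqrt (1 + l ^ 2)) / (Real.sqrt (1 + l ^ 2 * x ^ 2) + x * Real.sqrt (1 + l ^ 2)))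

lemma E_one_div_sq (G0 cB l : ℝ) {x : ℝ} (hx : 0 < x) :
    E G0 cB (1 / x ^ 2) l = x ^ 2 * rescaledE G0 cB l x := by
  set a := Real.sqrt (1 + l ^ 2 * x ^ 2) with ha
  set b := Real.sqrt (1 + l ^ 2) with hb
  have ha1 : 1 ≤ a := Real.one_le_sqrt.mpr (by nlinarith [sq_nonneg (l * x)])
  have hb1 : 1 ≤ b := Real.one_le_sqrt.mpr (by nlinarith [sq_nonneg l])
  have hsqrt_lam : Real.sqrt (1 / x ^ 2) = 1 / x := by
    rw [Real.sqrt_div' 1 (by positivity), Real.sqrt_one, Real.sqrt_sq hx.le]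
  have hsqrt_lam_add : Real.sqrt (1 / x ^ 2 + l ^ 2) = a / x := by
    rw [show 1 / x ^ 2 + l ^ 2 = (1 + l ^ 2 * x ^ 2) / x ^ 2 by field_simp,
      Real.sqrt_div' _ (by positivity), Real.sqrt_sq hx.le]
  rw [E, rescaledE, hsqrt_lam, hsqrt_lam_add, ← ha, ← hb]
  clear_value a b
  have : 0 < a / x + b := by positivity
  have : 0 < a + x * b := by positivity
  field_simp
  ring

lemma continuousAt_rescaledE_zero (G0 cB l : ℝ) : ContinuousAt (rescaledE G0 cB l) 0 := by
  unfold rescaledE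
  exact continuousAt_const.mul (.add (.div (by fun_prop) (by fun_prop) (by norm_num))
    (.div (by fun_prop) (by fun_prop) (by norm_num)))

lemma rescaledE_zero (G0 cB l : ℝ) :
    rescaledE G0 cB l 0 = G0 * cB * (Real.sqrt (1 + l ^ 2) - 1) := by
  simp only [rescaledE, ne_eq, OfNat.ofNat_ne_zero, not_false_eq_true, zero_pow, mul_zero,
    add_zero, zero_mul, Real.sqrt_one, div_one]
  ring

lemma E_eq_rescaledE_inv_sqrt (G0 cB l : ℝ) {lam : ℝ} (hlam : 0 < lam) :
    E G0 cB lam l = (Real.sqrt lam)⁻¹ ^ 2 * rescaledE G0 cB l (Real.sqrt lam)⁻¹ := by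
  have h := E_one_div_sq G0 cB l (inv_pos.mpr (Real.sqrt_pos.mpr hlam))
  simp only [one_div, inv_pow, inv_inv, Real.sq_sqrt hlam.le] at h ⊢
  exact h

lemma tendsto_inv_sqrt_atTop : Tendsto (fun lam : ℝ => (Real.sqrt lam)⁻¹) atTop (𝓝[>] 0) :=
  tendsto_inv_atTop_nhdsGT_zero.comp Real.tendsto_sqrt_atTop

lemma tendsto_rescaledE_nhdsGT_zero (G0 cB l : ℝ) :
    Tendsto (rescaledE G0 cB l) (𝓝[>] 0) (𝓝 (G0 * cB * (Real.sqrt (1 + l ^ 2) - 1))) :=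
  rescaledE_zero G0 cB l ▸ (continuousAt_rescaledE_zero G0 cB l).continuousWithinAt

lemma tendsto_sq_mul_rescaledE_nhdsGT_zero (G0 cB l : ℝ) :
    Tendsto (fun x => x ^ 2 * rescaledE G0 cB l x) (𝓝[>] 0) (𝓝 0) := by
  have hcont : ContinuousAt (fun x => x ^ 2 * rescaledE G0 cB l x) 0 :=
    (continuousAt_id.pow 2).mul (continuousAt_rescaledE_zero G0 cB l)
  simpa using hcont.tendsto.mono_left nhdsWithin_le_nhds

lemma rescaledE_zero_pos {G0 cB l : ℝ} (hG0 : 0 < G0) (hcB : 0 < cB) (hl : l ≠ 0) :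
    0 < G0 * cB * (Real.sqrt (1 + l ^ 2) - 1) := by
  have : 1 < Real.sqrt (1 + l ^ 2) := Real.lt_sqrt_of_sq_lt (by nlinarith [sq_pos_of_ne_zero hl])
  have := sub_pos.mpr this
  positivity

theorem stmt_4 (G0 cB l : ℝ) (hG0 : 0 < G0) (hcB : 0 < cB) (hl : 0 < l) :
    Filter.Tendsto (fun x : ℝ => E G0 cB (1 / x ^ 2) l / x ^ 2)
      (nhdsWithin 0 (Set.Ioi 0)) (nhds (G0 * cB * (Real.sqrt (1 + l ^ 2) - 1))) ∧
    Filter.Tendsto (fun lam : ℝ => E G0 cB lam l) Filter.atTop (nhds 0) ∧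
    ∃ Λ : ℝ, ∀ lam : ℝ, Λ < lam → 0 < E G0 cB lam l := by
  have hF := tendsto_rescaledE_nhdsGT_zero G0 cB l
  refine ⟨?_, ?_, ?_⟩
  · refine hF.congr' ?_
    filter_upwards [self_mem_nhdsWithin] with x (hx : 0 < x)
    rw [E_one_div_sq G0 cB l hx, mul_div_cancel_left₀ _ (pow_ne_zero 2 hx.ne')]
  · refine ((tendsto_sq_mul_rescaledE_nhdsGT_zero G0 cB l).comp tendsto_inv_sqrt_atTop).congr' ?_
    filter_upwards [eventually_gt_atTop 0] with lam hlam
    exact (E_eq_rescaledE_inv_sqrt G0 cB l hlam).symm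
  · have hF_pos := tendsto_inv_sqrt_atTop.eventually
      (hF.eventually (eventually_gt_nhds (rescaledE_zero_pos hG0 hcB hl.ne')))
    have hE_pos : ∀ᶠ lam in atTop, 0 < E G0 cB lam l := by
      filter_upwards [hF_pos, eventually_gt_atTop 0] with lam hpos hlam
      rw [E_eq_rescaledE_inv_sqrt G0 cB l hlam]
      have : 0 < (Real.sqrt lam)⁻¹ := inv_pos.mpr (Real.sqrt_pos.mpr hlam)
      positivity
    obtain ⟨Λ, hΛ⟩ := eventually_atTop.mp hE_pos
    exact ⟨Λ, fun lam hlam => hΛ lam hlam.le⟩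
end

section
/- For every fixed real λ > 1, there exists a unique l₀ > 0 such that E(λ, l₀) = 0; moreover E(λ, l) ≠ 0 for every real l > 0 with l ≠ l₀. -/
theorem existsUnique_pos_root_of_quadratic {a b c : ℝ} (ha : 0 < a) (hc : c < 0) :
    ∃! x : ℝ, 0 < x ∧ a * x ^ 2 + b * x + c = 0 := by
  obtain ⟨x, hx, hqx⟩ : ∃ x : ℝ, 0 < x ∧ a * x ^ 2 + b * x + c = 0 := by
    set d := √(b ^ 2 - 4 * a * c)
    have hd : d ^ 2 = b ^ 2 - 4 * a * c := Real.sq_sqrt (by nlinarith)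
    have hbd : b < d := Real.lt_sqrt_of_sq_lt (by nlinarith)
    refine ⟨(-b + d) / (2 * a), div_pos (by linarith) (by linarith), ?_⟩
    field_simp
    linear_combination hd
  refine ⟨x, ⟨hx, hqx⟩, fun y ⟨hy, hqy⟩ ↦ ?_⟩
  have hfactor : (y - x) * (a * x * y - c) = 0 := by linear_combination x * hqy - y * hqx
  have hpos : 0 < a * x * y - c := by nlinarith [mul_pos (mul_pos ha hx) hy]
  exact sub_eq_zero.1 ((mul_eq_zero.1 hfactor).resolve_right hpos.ne')

theorem Real.sqrt_add_sq_eq_sub {k l x : ℝ} (hk : 0 ≤ k) (hx : 0 < x)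
    (h : x * (x - 2 * l) = k) : √(k + l ^ 2) = x - l := by
  have hxl : 0 < x - l := by nlinarith
  rw [Real.sqrt_eq_iff_mul_self_eq_of_pos hxl]
  linear_combination h

def stationaryQuadratic (s l : ℝ) : ℝ :=
  4 * (s - 1) * l ^ 2 - (3 * s - 1) * (s - 3) * l - 4 * s * (s - 1)

section

variable {s l : ℝ}

theorem mul_bracket_eq {A B : ℝ} (hA : A ^ 2 = s ^ 2 + l ^ 2) (hB : B ^ 2 = 1 + l ^ 2)
    (hs : s + 1 ≠ 0) (hAB : A + B ≠ 0) :
    (s ^ 2 - 1) * (A + l) * ((s - l) / (s + 1) + (l - A) / (A + B)) =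
      s ^ 2 * (B + l) - (s + (s - 1) * l) * (A + l) := by
  field_simp
  linear_combination (s + 1) * ((A + B) * (B - A) - (A + l) * (l - A)) * hA
    + (s + 1) * (A + l) * (l - A) * hB

theorem bracket_eq_zero_iff_mul_eq (hs : 1 < s) (hl : 0 < l) :
    (s - l) / (s + 1) + (l - √(s ^ 2 + l ^ 2)) / (√(s ^ 2 + l ^ 2) + √(1 + l ^ 2)) = 0 ↔
      s ^ 2 * (√(1 + l ^ 2) + l) = (s + (s - 1) * l) * (√(s ^ 2 + l ^ 2) + l) := by
  have hA : 0 ≤ √(s ^ 2 + l ^ 2) := Real.sqrt_nonneg _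
  have hB : 0 < √(1 + l ^ 2) := Real.sqrt_pos.2 (by positivity)
  have hne : (s ^ 2 - 1) * (√(s ^ 2 + l ^ 2) + l) ≠ 0 := by
    have : 0 < s ^ 2 - 1 := by nlinarith
    positivity
  rw [← mul_eq_zero_iff_left hne, mul_bracket_eq (Real.sq_sqrt (by positivity))
    (Real.sq_sqrt (by positivity)) (by linarith) (by linarith), sub_eq_zero]

theorem stationaryQuadratic_eq_zero_of_mul_eq {A B : ℝ} (hs : 1 < s) (hl : 0 < l)
    (hA : A ^ 2 = s ^ 2 + l ^ 2) (hB : B ^ 2 = 1 + l ^ 2)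
    (h : s ^ 2 * (B + l) = (s + (s - 1) * l) * (A + l)) : stationaryQuadratic s l = 0 := by
  set t := s + (s - 1) * l
  have hsq : s ^ 2 * (B + l) ^ 2 = 2 * l * t * (B + l) + t ^ 2 := by
    refine mul_left_cancel₀ (pow_ne_zero 2 (by linarith : s ≠ 0)) ?_
    linear_combination (s ^ 2 * (B + l) + t * (A + l) - 2 * l * t) * h + t ^ 2 * hA
  have hlin : 2 * (s - l) * (B + l) = 2 * s + (s - 1) * l := by
    refine mul_left_cancel₀ (mul_ne_zero hl.ne' (by linarith : s - 1 ≠ 0)) ?_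
    linear_combination hsq - s ^ 2 * hB
  refine (mul_eq_zero.1 (?_ : l * stationaryQuadratic s l = 0)).resolve_left hl.ne'
  unfold stationaryQuadratic
  linear_combination -(2 * s - (s + 1) * l + 2 * l ^ 2 + 2 * (s - l) * B) * hlin
    + 4 * (s - l) ^ 2 * hB

theorem lt_of_stationaryQuadratic_eq_zero (hs : 1 < s) (hq : stationaryQuadratic s l = 0) :
    l < s := by
  by_contra! hsl
  -- q(l) = (l - s)(4(s - 1)(l + s) - (3s - 1)(s - 3)) + s(s + 1)²
  have hfactor : 0 ≤ (l - s) * (4 * (s - 1) * (l + s) - (3 * s - 1) * (s - 3)) := by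
    apply mul_nonneg <;> nlinarith
  unfold stationaryQuadratic at hq
  nlinarith [mul_pos (by linarith : 0 < s) (by positivity : 0 < (s + 1) ^ 2)]

theorem mul_eq_of_stationaryQuadratic_eq_zero (hs : 1 < s) (hl : 0 < l)
    (hq : stationaryQuadratic s l = 0) :
    s ^ 2 * (√(1 + l ^ 2) + l) = (s + (s - 1) * l) * (√(s ^ 2 + l ^ 2) + l) := by
  have hsl := lt_of_stationaryQuadratic_eq_zero hs hq
  set t := s + (s - 1) * l with ht_def
  have ht : 0 < t := by nlinarith
  set p := (2 * s + (s - 1) * l) / (2 * (s - l))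
  have hp : 0 < p := div_pos (by nlinarith) (by linarith)
  have hlin : 2 * (s - l) * p = 2 * s + (s - 1) * l := by
    simp only [p]
    field_simp [(by linarith : s - l ≠ 0)]
  clear_value p t
  have hpq : p * (p - 2 * l) = 1 := by
    refine mul_left_cancel₀ (by positivity : 4 * (s - l) ^ 2 ≠ 0) ?_
    unfold stationaryQuadratic at hq
    linear_combination (2 * (s - l) * p + 2 * s + (s - 1) * l - 4 * l * (s - l)) * hlin + l * hq
  have hp2 : s ^ 2 * p ^ 2 = 2 * l * t * p + t ^ 2 := by
    rw [ht_def]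
    linear_combination s ^ 2 * hpq + l * (s - 1) * hlin
  have hB : √(1 + l ^ 2) = p - l := Real.sqrt_add_sq_eq_sub zero_le_one hp hpq
  have hrq : s ^ 2 * p / t * (s ^ 2 * p / t - 2 * l) = s ^ 2 := by
    field_simp
    linear_combination hp2
  have hA : √(s ^ 2 + l ^ 2) = s ^ 2 * p / t - l :=
    Real.sqrt_add_sq_eq_sub (sq_nonneg s) (by positivity) hrq
  rw [hA, hB]
  field_simp
  ring

theorem existsUnique_pos_stationaryQuadratic_eq_zero (hs : 1 < s) :
    ∃! l : ℝ, 0 < l ∧ stationaryQuadratic s l = 0 := by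
  have hroot := existsUnique_pos_root_of_quadratic (b := -((3 * s - 1) * (s - 3)))
    (by linarith : 0 < 4 * (s - 1)) (by nlinarith : -(4 * s * (s - 1)) < 0)
  simpa only [stationaryQuadratic, neg_mul, ← sub_eq_add_neg] using hroot

theorem bracket_eq_zero_iff (hs : 1 < s) (hl : 0 < l) :
    (s - l) / (s + 1) + (l - √(s ^ 2 + l ^ 2)) / (√(s ^ 2 + l ^ 2) + √(1 + l ^ 2)) = 0 ↔
      stationaryQuadratic s l = 0 :=
  (bracket_eq_zero_iff_mul_eq hs hl).trans
    ⟨stationaryQuadratic_eq_zero_of_mul_eq hs hl (Real.sq_sqrt (by positivity))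
      (Real.sq_sqrt (by positivity)), mul_eq_of_stationaryQuadratic_eq_zero hs hl⟩

end

theorem E_eq_zero_iff {G0 cB lam l : ℝ} (hG0 : G0 ≠ 0) (hcB : cB ≠ 0) (hlam : 1 < lam)
    (hl : 0 < l) : E G0 cB lam l = 0 ↔ stationaryQuadratic (√lam) l = 0 := by
  have hs : 1 < √lam := Real.lt_sqrt_of_sq_lt (by simpa using hlam)
  have hprefactor : G0 * cB / √lam ≠ 0 := div_ne_zero (mul_ne_zero hG0 hcB) (by positivity)
  rw [E, mul_eq_zero_iff_left hprefactor, ← bracket_eq_zero_iff hs hl,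
    Real.sq_sqrt (by linarith)]

theorem stmt_5 (G0 cB lam : ℝ) (hG0 : 0 < G0) (hcB : 0 < cB) (hlam : 1 < lam) :
    ∃ l0 : ℝ, 0 < l0 ∧ E G0 cB lam l0 = 0 ∧
      ∀ l : ℝ, 0 < l → l ≠ l0 → E G0 cB lam l ≠ 0 := by
  have hE : ∀ l, 0 < l → (E G0 cB lam l = 0 ↔ stationaryQuadratic (√lam) l = 0) :=
    fun l hl ↦ E_eq_zero_iff hG0.ne' hcB.ne' hlam hl
  obtain ⟨l0, ⟨hl0, hq0⟩, hunique⟩ :=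
    existsUnique_pos_stationaryQuadratic_eq_zero (Real.lt_sqrt_of_sq_lt (by simpa using hlam))
  exact ⟨l0, hl0, (hE l0 hl0).2 hq0, fun l hl hne hEl ↦ hne (hunique l ⟨hl, (hE l hl).1 hEl⟩)⟩
end

section
/- Let l > 0 and let λ₀ > 0 satisfy E(λ₀, l) = 0. Then the derivative of λ ↦ E(λ, l) at λ₀ equals (G₀·c_B/(2√λ₀))·((l + 1)/(√λ₀·(√λ₀ + 1)²) − (l + √(1 + l²))/(√(λ₀ + l²)·(√(λ₀ + l²) + √(1 + l²))²)), and this value is strictly positive. -/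
/-!
Write `s = √λ`, `u = √(λ + l²)`, `m = √(1 + l²)`. Since `(x - l)/(x + c) = 1 - (l + c)/(x + c)`, the bracket
in `E` equals `(l + m)/(u + m) - (l + 1)/(s + 1)`, so at a zero `λ₀` both fractions share a common value `q > 0`.
Substituting `s + 1 = (l + 1)/q` and `u + m = (l + m)/q` turns the derivative bracket into
`q² (1/(s (l + 1)) - 1/(u (l + m)))`, which is positive because `s < u` and `1 < m`.
-/

open Real

section General

variable {𝕜 : Type*} [NontriviallyNormedField 𝕜] {f g φ : 𝕜 → 𝕜} {g' φ' x : 𝕜}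

theorem HasDerivAt.sub_div_add (l c : 𝕜) (hφ : HasDerivAt φ φ' x) (hc : φ x + c ≠ 0) :
    HasDerivAt (fun t => (φ t - l) / (φ t + c)) ((l + c) / (φ x + c) ^ 2 * φ') x := by
  refine ((hφ.sub_const l).div (hφ.add_const c) hc).congr_deriv ?_
  field_simp
  ring

theorem DifferentiableAt.hasDerivAt_mul_of_eq_zero (hf : DifferentiableAt 𝕜 f x)
    (hg : HasDerivAt g g' x) (hgx : g x = 0) :
    HasDerivAt (fun t => f t * g t) (f x * g') x := by
  have := hf.hasDerivAt.mul hg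
  rwa [hgx, mul_zero, zero_add] at this

theorem div_mul_sq_eq_div_sq_div (a b c : 𝕜) (ha : a ≠ 0) :
    a / (b * c ^ 2) = (a / c) ^ 2 / (b * a) := by
  rcases eq_or_ne b 0 with rfl | hb
  · simp
  rcases eq_or_ne c 0 with rfl | hc
  · simp
  field_simp

end General

noncomputable def evolutionBracket (l t : ℝ) : ℝ :=
  (√t - l) / (√t + 1) + (l - √(t + l ^ 2)) / (√(t + l ^ 2) + √(1 + l ^ 2))

theorem evolutionBracket_eq (l t : ℝ) :
    evolutionBracket l t =
      (l + √(1 + l ^ 2)) / (√(t + l ^ 2) + √(1 + l ^ 2)) - (l + 1) / (√t + 1) := by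
  have hm : 0 < √(1 + l ^ 2) := sqrt_pos.mpr (by positivity)
  have hs : 0 < √t + 1 := by positivity
  have hu : 0 < √(t + l ^ 2) + √(1 + l ^ 2) := by positivity
  rw [evolutionBracket]
  field_simp
  ring

theorem hasDerivAt_evolutionBracket (l : ℝ) {t : ℝ} (ht : 0 < t) :
    HasDerivAt (evolutionBracket l)
      (((l + 1) / (√t * (√t + 1) ^ 2) -
        (l + √(1 + l ^ 2)) / (√(t + l ^ 2) * (√(t + l ^ 2) + √(1 + l ^ 2)) ^ 2)) / 2) t := by
  have htl : 0 < t + l ^ 2 := by positivity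
  have hm : 0 < √(1 + l ^ 2) := sqrt_pos.mpr (by positivity)
  have hs := (hasDerivAt_sqrt ht.ne').sub_div_add l 1 (by positivity)
  have hu := (((hasDerivAt_id' t).add_const (l ^ 2)).sqrt htl.ne').sub_div_add l (√(1 + l ^ 2))
    (by positivity)
  have hsq : 0 < √t := sqrt_pos.mpr ht
  have huq : 0 < √(t + l ^ 2) := sqrt_pos.mpr htl
  have hfun : evolutionBracket l =
      fun t => (√t - l) / (√t + 1) - (√(t + l ^ 2) - l) / (√(t + l ^ 2) + √(1 + l ^ 2)) := by
    funext t
    simp only [evolutionBracket]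
    ring
  rw [hfun]
  refine (hs.sub hu).congr_deriv ?_
  field_simp

theorem evolutionBracket_eq_zero_of_E_eq_zero {G0 cB lam l : ℝ} (hG0 : 0 < G0) (hcB : 0 < cB)
    (hlam : 0 < lam) (h : E G0 cB lam l = 0) : evolutionBracket l lam = 0 :=
  (mul_eq_zero.mp h).resolve_left (by positivity)

theorem evolutionBracket_deriv_pos_of_eq_zero {l t : ℝ} (hl : 0 < l) (ht : 0 < t)
    (h : evolutionBracket l t = 0) :
    0 < (l + 1) / (√t * (√t + 1) ^ 2) -
      (l + √(1 + l ^ 2)) / (√(t + l ^ 2) * (√(t + l ^ 2) + √(1 + l ^ 2)) ^ 2) := by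
  have hq : (l + 1) / (√t + 1) = (l + √(1 + l ^ 2)) / (√(t + l ^ 2) + √(1 + l ^ 2)) := by
    rw [evolutionBracket_eq] at h
    linarith
  have hsu : √t < √(t + l ^ 2) := sqrt_lt_sqrt ht.le (lt_add_of_pos_right t (by positivity))
  have hm : 1 < √(1 + l ^ 2) := (lt_sqrt zero_le_one).mpr (by nlinarith)
  have hs : 0 < √t := sqrt_pos.mpr ht
  rw [div_mul_sq_eq_div_sq_div _ _ _ (by positivity : l + 1 ≠ 0),
    div_mul_sq_eq_div_sq_div _ _ _ (by positivity : l + √(1 + l ^ 2) ≠ 0), ← hq]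
  exact sub_pos.mpr (div_lt_div_of_pos_left (by positivity) (by positivity)
    (mul_lt_mul'' hsu (by linarith) hs.le (by positivity)))

theorem stmt_8 (G0 cB l lam0 : ℝ) (hG0 : 0 < G0) (hcB : 0 < cB) (hl : 0 < l)
    (hlam0 : 0 < lam0) (hzero : E G0 cB lam0 l = 0) :
    HasDerivAt (fun t : ℝ => E G0 cB t l)
      ((G0 * cB / (2 * Real.sqrt lam0)) *
        ((l + 1) / (Real.sqrt lam0 * (Real.sqrt lam0 + 1) ^ 2) -
          (l + Real.sqrt (1 + l ^ 2)) /
            (Real.sqrt (lam0 + l ^ 2) *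
              (Real.sqrt (lam0 + l ^ 2) + Real.sqrt (1 + l ^ 2)) ^ 2)))
      lam0 ∧
    0 < (G0 * cB / (2 * Real.sqrt lam0)) *
        ((l + 1) / (Real.sqrt lam0 * (Real.sqrt lam0 + 1) ^ 2) -
          (l + Real.sqrt (1 + l ^ 2)) /
            (Real.sqrt (lam0 + l ^ 2) *
              (Real.sqrt (lam0 + l ^ 2) + Real.sqrt (1 + l ^ 2)) ^ 2)) := by
  have hbracket := evolutionBracket_eq_zero_of_E_eq_zero hG0 hcB hlam0 hzero
  refine ⟨?_, ?_⟩
  · have hprefactor : DifferentiableAt ℝ (fun t => G0 * cB / √t) lam0 :=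
      (differentiableAt_const _).div (hasDerivAt_sqrt hlam0.ne').differentiableAt
        (sqrt_pos.mpr hlam0).ne'
    exact (hprefactor.hasDerivAt_mul_of_eq_zero (hasDerivAt_evolutionBracket l hlam0)
      hbracket).congr_deriv (by ring)
  · exact mul_pos (by positivity) (evolutionBracket_deriv_pos_of_eq_zero hl hlam0 hbracket)
end

section
/- Let l ≥ 1 be an integer and let λ₀ > 0 satisfy E(λ₀, l) = 0 with λ₀ > l² (so λ₀ > 1). Then for every positive integer j with j ≠ l one has E(λ₀, j) ≠ 0; that is, among the perturbation modes j = 1, 2, 3, …, only the mode j = l satisfies E(λ₀, j) = 0. -/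
/-- Auxiliary function whose strict monotonicity characterizes zeros of `E`. -/
noncomputable def Ffun (lam u : ℝ) : ℝ :=
  (u / (Real.sqrt lam + Real.sqrt (lam + u ^ 2)) + u / (1 + Real.sqrt (1 + u ^ 2))) *
    (Real.sqrt lam * Real.sqrt (1 + u ^ 2) + Real.sqrt (lam + u ^ 2))

lemma Ffun_mono {lam u v : ℝ} (hlam0 : 0 < lam) (hlam : 1 ≤ lam) (hu : 0 < u)
    (huv : u < v) : Ffun lam u < Ffun lam v := by
  have hv : 0 < v := hu.trans huv
  set A := Real.sqrt lam with hAdef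
  set Bu := Real.sqrt (lam + u ^ 2) with hBudef
  set Bv := Real.sqrt (lam + v ^ 2) with hBvdef
  set Cu := Real.sqrt (1 + u ^ 2) with hCudef
  set Cv := Real.sqrt (1 + v ^ 2) with hCvdef
  have hA0 : 0 < A := Real.sqrt_pos.2 hlam0
  have hBu0 : 0 < Bu := Real.sqrt_pos.2 (by positivity)
  have hBv0 : 0 < Bv := Real.sqrt_pos.2 (by positivity)
  have hCu0 : 0 < Cu := Real.sqrt_pos.2 (by positivity)
  have hCv0 : 0 < Cv := Real.sqrt_pos.2 (by positivity)
  have hu2v2 : u ^ 2 < v ^ 2 := by nlinarith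
  have hBuv : Bu < Bv := Real.sqrt_lt_sqrt (by positivity) (by linarith)
  have hCuv : Cu < Cv := Real.sqrt_lt_sqrt (by positivity) (by linarith)
  -- fact (a): Cu * Bv ≤ Cv * Bu
  have hBu2 : Bu ^ 2 = lam + u ^ 2 := Real.sq_sqrt (by positivity)
  have hBv2 : Bv ^ 2 = lam + v ^ 2 := Real.sq_sqrt (by positivity)
  have hCu2 : Cu ^ 2 = 1 + u ^ 2 := Real.sq_sqrt (by positivity)
  have hCv2 : Cv ^ 2 = 1 + v ^ 2 := Real.sq_sqrt (by positivity)
  have ha : Cu * Bv ≤ Cv * Bu := by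
    have e1 : Cu * Bv = Real.sqrt ((Cu * Bv) ^ 2) := (Real.sqrt_sq (by positivity)).symm
    have e2 : Cv * Bu = Real.sqrt ((Cv * Bu) ^ 2) := (Real.sqrt_sq (by positivity)).symm
    rw [e1, e2]
    apply Real.sqrt_le_sqrt
    have expand1 : (Cu * Bv) ^ 2 = (1 + u ^ 2) * (lam + v ^ 2) := by
      rw [mul_pow, hCu2, hBv2]
    have expand2 : (Cv * Bu) ^ 2 = (1 + v ^ 2) * (lam + u ^ 2) := by
      rw [mul_pow, hCv2, hBu2]
    rw [expand1, expand2]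
    nlinarith [mul_nonneg (sub_nonneg.2 hlam) (sub_nonneg.2 hu2v2.le)]
  -- fact (b): u * Bu * Cv ≤ v * Bv * Cu
  have hb : u * Bu * Cv ≤ v * Bv * Cu := by
    have e1 : u * Bu * Cv = Real.sqrt ((u * Bu * Cv) ^ 2) :=
      (Real.sqrt_sq (by positivity)).symm
    have e2 : v * Bv * Cu = Real.sqrt ((v * Bv * Cu) ^ 2) :=
      (Real.sqrt_sq (by positivity)).symm
    rw [e1, e2]
    apply Real.sqrt_le_sqrt
    have expand1 : (u * Bu * Cv) ^ 2 = u ^ 2 * (lam + u ^ 2) * (1 + v ^ 2) := by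
      rw [mul_pow, mul_pow, hBu2, hCv2]
    have expand2 : (v * Bv * Cu) ^ 2 = v ^ 2 * (lam + v ^ 2) * (1 + u ^ 2) := by
      rw [mul_pow, mul_pow, hBv2, hCu2]
    rw [expand1, expand2]
    nlinarith [mul_nonneg (sub_nonneg.2 hu2v2.le)
      (by positivity : (0:ℝ) ≤ lam + u ^ 2 + v ^ 2 + u ^ 2 * v ^ 2)]
  -- decompositions into four terms
  have hABu : 0 < A + Bu := by linarith
  have hABv : 0 < A + Bv := by linarith
  have hCu1 : 0 < 1 + Cu := by linarith
  have hCv1 : 0 < 1 + Cv := by linarith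
  have hdecu : Ffun lam u = u * Bu / (A + Bu) + u * (A * Cu) / (A + Bu)
      + u * Bu / (1 + Cu) + u * (A * Cu) / (1 + Cu) := by
    rw [Ffun, ← hAdef, ← hBudef, ← hCudef]
    field_simp
    ring
  have hdecv : Ffun lam v = v * Bv / (A + Bv) + v * (A * Cv) / (A + Bv)
      + v * Bv / (1 + Cv) + v * (A * Cv) / (1 + Cv) := by
    rw [Ffun, ← hAdef, ← hBvdef, ← hCvdef]
    field_simp
    ring
  rw [hdecu, hdecv]
  have huBvB : u * Bu < v * Bv := mul_lt_mul'' huv hBuv hu.le hBu0.le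
  have huCvC : u * Cu < v * Cv := mul_lt_mul'' huv hCuv hu.le hCu0.le
  have t1 : u * Bu / (A + Bu) < v * Bv / (A + Bv) := by
    rw [div_lt_div_iff₀ hABu hABv]
    have r1 : u * Bu * A < v * Bv * A := mul_lt_mul_of_pos_right huBvB hA0
    have r2 : u * (Bu * Bv) < v * (Bu * Bv) :=
      mul_lt_mul_of_pos_right huv (mul_pos hBu0 hBv0)
    have e1 : u * Bu * (A + Bv) = u * Bu * A + u * (Bu * Bv) := by ring
    have e2 : v * Bv * (A + Bu) = v * Bv * A + v * (Bu * Bv) := by ring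
    rw [e1, e2]
    exact add_lt_add r1 r2
  have t2 : u * (A * Cu) / (A + Bu) < v * (A * Cv) / (A + Bv) := by
    rw [div_lt_div_iff₀ hABu hABv]
    have r1 : u * Cu * A < v * Cv * A := mul_lt_mul_of_pos_right huCvC hA0
    have r2 : u * (Cu * Bv) ≤ u * (Cv * Bu) := mul_le_mul_of_nonneg_left ha hu.le
    have r3 : u * (Cv * Bu) < v * (Cv * Bu) :=
      mul_lt_mul_of_pos_right huv (mul_pos hCv0 hBu0)
    have r4 : u * (Cu * Bv) < v * (Cv * Bu) := lt_of_le_of_lt r2 r3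
    have e1 : u * (A * Cu) * (A + Bv) = u * Cu * A * A + A * (u * (Cu * Bv)) := by ring
    have e2 : v * (A * Cv) * (A + Bu) = v * Cv * A * A + A * (v * (Cv * Bu)) := by ring
    rw [e1, e2]
    exact add_lt_add (mul_lt_mul_of_pos_right r1 hA0) (mul_lt_mul_of_pos_left r4 hA0)
  have t3 : u * Bu / (1 + Cu) < v * Bv / (1 + Cv) := by
    rw [div_lt_div_iff₀ hCu1 hCv1]
    have e1 : u * Bu * (1 + Cv) = u * Bu + u * Bu * Cv := by ring
    have e2 : v * Bv * (1 + Cu) = v * Bv + v * Bv * Cu := by ring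
    rw [e1, e2]
    exact add_lt_add_of_lt_of_le huBvB hb
  have t4 : u * (A * Cu) / (1 + Cu) < v * (A * Cv) / (1 + Cv) := by
    rw [div_lt_div_iff₀ hCu1 hCv1]
    have r2 : u * (Cu * Cv) < v * (Cu * Cv) :=
      mul_lt_mul_of_pos_right huv (mul_pos hCu0 hCv0)
    have e1 : u * (A * Cu) * (1 + Cv) = A * (u * Cu) + A * (u * (Cu * Cv)) := by ring
    have e2 : v * (A * Cv) * (1 + Cu) = A * (v * Cv) + A * (v * (Cu * Cv)) := by ring
    rw [e1, e2]
    exact add_lt_add (mul_lt_mul_of_pos_left huCvC hA0) (mul_lt_mul_of_pos_left r2 hA0)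
  linarith

lemma E_zero_iff {G0 cB lam u : ℝ} (hG0 : 0 < G0) (hcB : 0 < cB) (hlam : 0 < lam)
    (hu : 0 < u) : E G0 cB lam u = 0 ↔ Ffun lam u = lam - 1 := by
  set A := Real.sqrt lam with hAdef
  set B := Real.sqrt (lam + u ^ 2) with hBdef
  set C := Real.sqrt (1 + u ^ 2) with hCdef
  have hA0 : 0 < A := Real.sqrt_pos.2 hlam
  have hB0 : 0 < B := Real.sqrt_pos.2 (by positivity)
  have hC0 : 0 < C := Real.sqrt_pos.2 (by positivity)
  have hA2 : A ^ 2 = lam := Real.sq_sqrt hlam.le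
  have hB2 : B ^ 2 = lam + u ^ 2 := Real.sq_sqrt (by positivity)
  have hC2 : C ^ 2 = 1 + u ^ 2 := Real.sq_sqrt (by positivity)
  have hACB : 0 < A * C + B := by positivity
  have hAB : 0 < A + B := by linarith
  have hC1 : 0 < 1 + C := by linarith
  have hA1 : 0 < A + 1 := by linarith
  have hBC : 0 < B + C := by linarith
  -- the three small identities
  have h1 : A * C - B = (lam - 1) * u ^ 2 / (A * C + B) := by
    rw [eq_div_iff hACB.ne']
    linear_combination C ^ 2 * hA2 + lam * hC2 - hB2
  have h2 : A - B = -(u ^ 2 / (A + B)) := by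
    rw [neg_div', eq_div_iff hAB.ne']
    linear_combination hA2 - hB2
  have h3 : 1 - C = -(u ^ 2 / (1 + C)) := by
    rw [neg_div', eq_div_iff hC1.ne']
    linear_combination -hC2
  -- E = coefficient * inner
  have hcoef : G0 * cB / A ≠ 0 := by positivity
  have hEeq : E G0 cB lam u = (G0 * cB / A) * ((A - u) / (A + 1) + (u - B) / (B + C)) := by
    rw [E, ← hAdef, ← hBdef, ← hCdef]
  have hinner : (A - u) / (A + 1) + (u - B) / (B + C)
      = ((A * C - B) + u * ((A - B) + (1 - C))) / ((A + 1) * (B + C)) := by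
    rw [div_add_div _ _ hA1.ne' hBC.ne']
    congr 1
    ring
  have hN : (A * C - B) + u * ((A - B) + (1 - C))
      = u ^ 2 * ((lam - 1) / (A * C + B) - u / (A + B) - u / (1 + C)) := by
    rw [h1, h2, h3]
    field_simp
    ring
  constructor
  · intro hE
    rw [hEeq] at hE
    rcases mul_eq_zero.1 hE with h | h
    · exact absurd h hcoef
    · rw [hinner, div_eq_zero_iff] at h
      rcases h with h | h
      · rw [hN, mul_eq_zero] at h
        rcases h with h | h
        · exact absurd h (by positivity)
        · have hkey : (lam - 1) / (A * C + B) = u / (A + B) + u / (1 + C) := by linarith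
          rw [div_eq_iff hACB.ne'] at hkey
          rw [Ffun, ← hAdef, ← hBdef, ← hCdef]
          linarith [hkey]
      · exact absurd h (by positivity)
  · intro hF
    rw [Ffun, ← hAdef, ← hBdef, ← hCdef] at hF
    have hkey : (lam - 1) / (A * C + B) = u / (A + B) + u / (1 + C) := by
      rw [div_eq_iff hACB.ne']
      linarith [hF]
    rw [hEeq, hinner, hN, hkey]
    ring
  
theorem stmt_9 (G0 cB : ℝ) (hG0 : 0 < G0) (hcB : 0 < cB) (l : ℕ) (hl : 1 ≤ l)
    (lam0 : ℝ) (hlam0 : 0 < lam0) (hgt : (l : ℝ) ^ 2 < lam0)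
    (hzero : E G0 cB lam0 (l : ℝ) = 0) :
    ∀ j : ℕ, 1 ≤ j → j ≠ l → E G0 cB lam0 (j : ℝ) ≠ 0 := by
  have hl1 : (1 : ℝ) ≤ (l : ℝ) := by exact_mod_cast hl
  have hl0 : (0 : ℝ) < (l : ℝ) := by linarith
  have hlam1 : 1 ≤ lam0 := by nlinarith
  intro j hj hjl hEj
  have hj1 : (0 : ℝ) < (j : ℝ) := by
    have : (1 : ℝ) ≤ (j : ℝ) := by exact_mod_cast hj
    linarith
  have hFl : Ffun lam0 (l : ℝ) = lam0 - 1 := (E_zero_iff hG0 hcB hlam0 hl0).1 hzero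
  have hFj : Ffun lam0 (j : ℝ) = lam0 - 1 := (E_zero_iff hG0 hcB hlam0 hj1).1 hEj
  rcases lt_or_gt_of_ne hjl with h | h
  · have hc : ((j : ℝ)) < (l : ℝ) := by exact_mod_cast h
    have := Ffun_mono hlam0 hlam1 hj1 hc
    rw [hFl, hFj] at this
    exact lt_irrefl _ this
  · have hc : ((l : ℝ)) < (j : ℝ) := by exact_mod_cast h
    have := Ffun_mono hlam0 hlam1 hl0 hc
    rw [hFl, hFj] at this
    exact lt_irrefl _ this
end

section
/- Fix λ > 0 and constants G₀ > 0, c_B > 0, and define p₀ⁱ(x) = (G₀·c_B/(λ(√λ + 1)))·(1 − e^{√λ·x}) and p₀ᵒ(x) = G₀·c_B·(−x²/2 + (√λ/(√λ + 1))·e^{−x} + ((λ − 1)/(√λ(√λ + 1)))·x − √λ/(√λ + 1)). Then with c₀ⁱ(x) = (c_B/(√λ + 1))·e^{√λ·x} and c₀ᵒ(x) = c_B − (c_B·√λ/(√λ + 1))·e^{−x}: (1) −(p₀ⁱ)''(x) = G₀·c₀ⁱ(x) for all x ≤ 0; (2) −(p₀ᵒ)''(x) = G₀·c₀ᵒ(x)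 for all x ≥ 0; (3) p₀ⁱ(0) = p₀ᵒ(0) = 0; (4) (p₀ⁱ)'(0) = (p₀ᵒ)'(0); (5) 0 ≤ p₀ⁱ(x) ≤ G₀·c_B/(λ(√λ + 1)) for all x ≤ 0, so p₀ⁱ is bounded on (−∞, 0]. -/
/-!
Both pressures are polynomial-exponential expressions, so (1)–(4) are derivative computations.
Writing `λ = s²` with `s > 0` removes the square roots; the matching of slopes at `0` then
reduces to `-s / (s + 1) + (s² - 1) / (s (s + 1)) = -s / (s² (s + 1))`, and (5) is
`0 < e^{s x} ≤ 1` for `x ≤ 0`.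
-/

open Real

theorem hasDerivAt_exp_const_mul (a x : ℝ) :
    HasDerivAt (fun y => exp (a * y)) (a * exp (a * x)) x := by
  simpa [mul_comm] using ((hasDerivAt_id x).const_mul a).exp

theorem hasDerivAt_exp_neg (x : ℝ) : HasDerivAt (fun y => exp (-y)) (-exp (-x)) x := by
  simpa using hasDerivAt_exp_const_mul (-1) x

theorem deriv_const_mul_one_sub_exp_const_mul (A a : ℝ) :
    deriv (fun x => A * (1 - exp (a * x))) = fun x => -(A * a * exp (a * x)) := by
  funext x
  have h : HasDerivAt (fun x => A * (1 - exp (a * x))) (-(A * a * exp (a * x))) x :=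
    (((hasDerivAt_exp_const_mul a x).const_sub 1).const_mul A).congr_deriv (by ring)
  exact h.deriv

theorem deriv_deriv_const_mul_one_sub_exp_const_mul (A a : ℝ) :
    deriv (deriv fun x => A * (1 - exp (a * x))) = fun x => -(A * a ^ 2 * exp (a * x)) := by
  rw [deriv_const_mul_one_sub_exp_const_mul]
  funext x
  have h : HasDerivAt (fun x => -(A * a * exp (a * x))) (-(A * a ^ 2 * exp (a * x))) x :=
    ((hasDerivAt_exp_const_mul a x).const_mul (A * a)).neg.congr_deriv (by ring)
  exact h.deriv

theorem const_mul_one_sub_exp_mem_Icc {A y : ℝ} (hA : 0 ≤ A) (hy : y ≤ 0) :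
    A * (1 - exp y) ∈ Set.Icc 0 A := by
  have h1 : exp y ≤ 1 := exp_le_one_iff.2 hy
  have h2 : 0 < exp y := exp_pos y
  constructor <;> nlinarith

theorem deriv_const_mul_quadratic_add_exp_neg (K B C D : ℝ) :
    deriv (fun x : ℝ => K * (-(x ^ 2) / 2 + B * exp (-x) + C * x - D)) =
      fun x => K * (-x - B * exp (-x) + C) := by
  funext x
  have h : HasDerivAt (fun x : ℝ => K * (-(x ^ 2) / 2 + B * exp (-x) + C * x - D))
      (K * (-x - B * exp (-x) + C)) x :=
    (((((hasDerivAt_pow 2 x).neg.div_const 2).add ((hasDerivAt_exp_neg x).const_mul B)).add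
      ((hasDerivAt_id x).const_mul C)).sub_const D).const_mul K |>.congr_deriv (by ring)
  exact h.deriv

theorem deriv_deriv_const_mul_quadratic_add_exp_neg (K B C D : ℝ) :
    deriv (deriv fun x : ℝ => K * (-(x ^ 2) / 2 + B * exp (-x) + C * x - D)) =
      fun x => K * (-1 + B * exp (-x)) := by
  rw [deriv_const_mul_quadratic_add_exp_neg]
  funext x
  have h : HasDerivAt (fun x : ℝ => K * (-x - B * exp (-x) + C)) (K * (-1 + B * exp (-x))) x :=
    (((hasDerivAt_id x).neg.sub ((hasDerivAt_exp_neg x).const_mul B)).add_const C).const_mul K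
      |>.congr_deriv (by ring)
  exact h.deriv

theorem stmt_11 (G0 cB lam : ℝ) (hG0 : 0 < G0) (hcB : 0 < cB) (hlam : 0 < lam)
    (c0i c0o p0i p0o : ℝ → ℝ)
    (hc0i : c0i = fun x : ℝ => cB / (Real.sqrt lam + 1) * Real.exp (Real.sqrt lam * x))
    (hc0o : c0o = fun x : ℝ =>
      cB - cB * Real.sqrt lam / (Real.sqrt lam + 1) * Real.exp (-x))
    (hp0i : p0i = fun x : ℝ =>
      G0 * cB / (lam * (Real.sqrt lam + 1)) * (1 - Real.exp (Real.sqrt lam * x)))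
    (hp0o : p0o = fun x : ℝ =>
      G0 * cB * (-(x ^ 2) / 2 + Real.sqrt lam / (Real.sqrt lam + 1) * Real.exp (-x) +
        (lam - 1) / (Real.sqrt lam * (Real.sqrt lam + 1)) * x -
        Real.sqrt lam / (Real.sqrt lam + 1))) :
    (∀ x : ℝ, x ≤ 0 → -(deriv (deriv p0i) x) = G0 * c0i x) ∧
    (∀ x : ℝ, 0 ≤ x → -(deriv (deriv p0o) x) = G0 * c0o x) ∧
    p0i 0 = 0 ∧ p0o 0 = 0 ∧
    deriv p0i 0 = deriv p0o 0 ∧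
    (∀ x : ℝ, x ≤ 0 → 0 ≤ p0i x ∧ p0i x ≤ G0 * cB / (lam * (Real.sqrt lam + 1))) := by
  subst hc0i hc0o hp0i hp0o
  obtain ⟨s, hs, rfl⟩ : ∃ s, 0 < s ∧ s ^ 2 = lam := ⟨√lam, sqrt_pos.2 hlam, sq_sqrt hlam.le⟩
  simp only [sqrt_sq hs.le]
  refine ⟨fun x _ => ?_, fun x _ => ?_, by simp, by simp, ?_, fun x hx =>
    const_mul_one_sub_exp_mem_Icc (by positivity) (mul_nonpos_of_nonneg_of_nonpos hs.le hx)⟩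
  · rw [deriv_deriv_const_mul_one_sub_exp_const_mul]
    field_simp
  · rw [deriv_deriv_const_mul_quadratic_add_exp_neg]
    field_simp
    ring
  · rw [deriv_const_mul_one_sub_exp_const_mul, deriv_const_mul_quadratic_add_exp_neg]
    simp only [mul_zero, neg_zero, exp_zero]
    field_simp
    ring
end

section
/- Fix λ > 0, an integer l ≥ 1, and constants G₀ > 0, c_B > 0. Define c̃ⁱ(x) = −(√λ·c_B/(√(λ + l²) + √(1 + l²)))·e^{√(λ + l²)·x} and c̃ᵒ(x) = −(√λ·c_B/(√(λ + l²) + √(1 + l²)))·e^{−√(1 + l²)·x}, and let c₀ⁱ(x) = (c_B/(√λ + 1))·e^{√λ·x}, c₀ᵒ(x) = c_B − (c_B·√λ/(√λ + 1))·e^{−x}. Then: (1) −(c̃ⁱ)''(x) + (λ + l²)·c̃ⁱ(x) = 0 for all x ≤ 0; (2) −(c̃ᵒ)''(x) + (1 + l²)·c̃ᵒ(x) = 0 for all x ≥ 0; (3) (c₀ⁱ)'(0) + c̃ⁱ(0) = (c₀ᵒ)'(0) + c̃ᵒ(0); (4) (c₀ⁱ)''(0) + (c̃ⁱ)'(0)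 = (c₀ᵒ)''(0) + (c̃ᵒ)'(0); (5) c̃ⁱ is bounded on (−∞, 0] and c̃ᵒ is bounded on [0, ∞). -/
/-! Every function involved is of the form `x ↦ c + a * exp (k * x)`, so its derivatives are
explicit, and each claim reduces to an algebraic identity in the exponents.  The only genuine
relation is the choice of the amplitude `A = -(√λ c_B) / (√(λ + l²) + √(1 + l²))` of the
correction: it is exactly what makes `A (√(λ + l²) + √(1 + l²)) + √λ c_B = 0`, which balances the
jump `(c₀ⁱ)''(0) - (c₀ᵒ)''(0) = √λ c_B` in the second matching condition. -/

open Real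

lemma deriv_const_mul_exp_mul (a k : ℝ) :
    (deriv fun x : ℝ => a * exp (k * x)) = fun x => a * k * exp (k * x) := by
  funext x
  have h := (((hasDerivAt_id x).const_mul k).exp).const_mul a
  simp only [id_eq, mul_one] at h
  rw [h.deriv]
  ring

lemma abs_const_mul_exp_mul_le {a k x : ℝ} (h : k * x ≤ 0) : |a * exp (k * x)| ≤ |a| := by
  rw [abs_mul, abs_exp]
  exact mul_le_of_le_one_right (abs_nonneg a) (exp_le_one_iff.2 h)

theorem stmt_13_general (cB lam : ℝ) (hlam : 0 < lam)
    (l : ℕ)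
    (c0i c0o cti cto : ℝ → ℝ)
    (hc0i : c0i = fun x : ℝ => cB / (Real.sqrt lam + 1) * Real.exp (Real.sqrt lam * x))
    (hc0o : c0o = fun x : ℝ =>
      cB - cB * Real.sqrt lam / (Real.sqrt lam + 1) * Real.exp (-x))
    (hcti : cti = fun x : ℝ =>
      -(Real.sqrt lam * cB / (Real.sqrt (lam + (l : ℝ) ^ 2) + Real.sqrt (1 + (l : ℝ) ^ 2))) *
        Real.exp (Real.sqrt (lam + (l : ℝ) ^ 2) * x))
    (hcto : cto = fun x : ℝ =>
      -(Real.sqrt lam * cB / (Real.sqrt (lam + (l : ℝ) ^ 2) + Real.sqrt (1 + (l : ℝ) ^ 2))) *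
        Real.exp (-(Real.sqrt (1 + (l : ℝ) ^ 2)) * x)) :
    (∀ x : ℝ, x ≤ 0 → -(deriv (deriv cti) x) + (lam + (l : ℝ) ^ 2) * cti x = 0) ∧
    (∀ x : ℝ, 0 ≤ x → -(deriv (deriv cto) x) + (1 + (l : ℝ) ^ 2) * cto x = 0) ∧
    deriv c0i 0 + cti 0 = deriv c0o 0 + cto 0 ∧
    deriv (deriv c0i) 0 + deriv cti 0 = deriv (deriv c0o) 0 + deriv cto 0 ∧
    (∃ C : ℝ, ∀ x : ℝ, x ≤ 0 → |cti x| ≤ C) ∧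
    (∃ C : ℝ, ∀ x : ℝ, 0 ≤ x → |cto x| ≤ C) := by
  set s := √lam
  set S := √(lam + (l : ℝ) ^ 2)
  set T := √(1 + (l : ℝ) ^ 2)
  set A := -(s * cB / (S + T)) with hA_def
  have hS_sq : S ^ 2 = lam + (l : ℝ) ^ 2 := sq_sqrt (by positivity)
  have hT_sq : T ^ 2 = 1 + (l : ℝ) ^ 2 := sq_sqrt (by positivity)
  have hA : A * (S + T) + s * cB = 0 := by
    have : 0 < S + T := by positivity
    rw [hA_def]; field_simp; ring
  obtain rfl : c0o = fun x => cB + -(cB * s / (s + 1)) * exp (-1 * x) := by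
    rw [hc0o]; funext x; ring_nf
  subst hc0i hcti hcto
  simp only [deriv_const_add', deriv_const_mul_exp_mul, mul_zero, exp_zero, mul_one]
  refine ⟨fun x _ => by linear_combination (-(A * exp (S * x))) * hS_sq,
    fun x _ => by linear_combination (-(A * exp (-T * x))) * hT_sq, by ring, ?_,
    ⟨|A|, fun x hx =>
      abs_const_mul_exp_mul_le (mul_nonpos_of_nonneg_of_nonpos (sqrt_nonneg _) hx)⟩,
    ⟨|A|, fun x hx => abs_const_mul_exp_mul_le (by simpa using mul_nonneg (sqrt_nonneg _) hx)⟩⟩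
  have hs : s + 1 ≠ 0 := by positivity
  field_simp
  linear_combination (s + 1) * hA

theorem stmt_13 (G0 cB lam : ℝ) (hG0 : 0 < G0) (hcB : 0 < cB) (hlam : 0 < lam)
    (l : ℕ) (hl : 1 ≤ l)
    (c0i c0o cti cto : ℝ → ℝ)
    (hc0i : c0i = fun x : ℝ => cB / (Real.sqrt lam + 1) * Real.exp (Real.sqrt lam * x))
    (hc0o : c0o = fun x : ℝ =>
      cB - cB * Real.sqrt lam / (Real.sqrt lam + 1) * Real.exp (-x))
    (hcti : cti = fun x : ℝ =>
      -(Real.sqrt lam * cB / (Real.sqrt (lam + (l : ℝ) ^ 2) + Real.sqrt (1 + (l : ℝ) ^ 2))) *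
        Real.exp (Real.sqrt (lam + (l : ℝ) ^ 2) * x))
    (hcto : cto = fun x : ℝ =>
      -(Real.sqrt lam * cB / (Real.sqrt (lam + (l : ℝ) ^ 2) + Real.sqrt (1 + (l : ℝ) ^ 2))) *
        Real.exp (-(Real.sqrt (1 + (l : ℝ) ^ 2)) * x)) :
    (∀ x : ℝ, x ≤ 0 → -(deriv (deriv cti) x) + (lam + (l : ℝ) ^ 2) * cti x = 0) ∧
    (∀ x : ℝ, 0 ≤ x → -(deriv (deriv cto) x) + (1 + (l : ℝ) ^ 2) * cto x = 0) ∧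
    deriv c0i 0 + cti 0 = deriv c0o 0 + cto 0 ∧
    deriv (deriv c0i) 0 + deriv cti 0 = deriv (deriv c0o) 0 + deriv cto 0 ∧
    (∃ C : ℝ, ∀ x : ℝ, x ≤ 0 → |cti x| ≤ C) ∧
    (∃ C : ℝ, ∀ x : ℝ, 0 ≤ x → |cto x| ≤ C) :=
  stmt_13_general cB lam hlam l c0i c0o cti cto hc0i hc0o hcti hcto
end

section
/- Fix λ > 0, an integer l ≥ 1, and constants G₀ > 0, c_B > 0. Define p̃ⁱ(x) = (G₀·c_B/√λ)·((1/(√λ + 1) − 1/(√(λ + l²) + √(1 + l²)))·e^{l·x} + e^{√(λ + l²)·x}/(√(λ + l²) + √(1 + l²))), and let c̃ⁱ(x) = −(√λ·c_B/(√(λ + l²) + √(1 + l²)))·e^{√(λ + l²)·x} and p₀ⁱ(x) = (G₀·c_B/(λ(√λ + 1)))·(1 − e^{√λ·x}). Then: (1) −(p̃ⁱ)''(x) + l²·p̃ⁱ(x) = G₀·c̃ⁱ(x) for all x ≤ 0; (2) (p₀ⁱ)'(0) + p̃ⁱ(0) = 0; (3) p̃ⁱ is bounded on (−∞, 0]. 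-/
/-! Both `p̃ⁱ` and `p₀ⁱ` are combinations of exponentials `eᵏˣ`, for which everything is explicit:
`−d²/dx² + l²` sends `eᵏˣ` to `(l² − k²) eᵏˣ`, so it kills the `eˡˣ` mode of `p̃ⁱ` and, since
`μ² = λ + l²` for `μ = √(λ + l²)`, multiplies the `e^{μx}` mode by `−λ`, which is the source `G₀ c̃ⁱ`.
At `x = 0` the two modes of `p̃ⁱ` sum to `G₀c_B/(√λ(√λ + 1))`, which cancels `(p₀ⁱ)'(0)` because
`λ = (√λ)²`; and on `x ≤ 0` every exponential with a nonnegative rate is at most `1`. -/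

open Real

section ExpCombination

variable (a b k m : ℝ)

theorem hasDerivAt_mul_exp_mul (x : ℝ) :
    HasDerivAt (fun x => a * exp (k * x)) (a * k * exp (k * x)) x := by
  have h := ((hasDerivAt_id x).const_mul k).exp.const_mul a
  simp only [id, mul_one] at h
  rwa [mul_comm (exp _), ← mul_assoc] at h

theorem deriv_mul_exp_mul_add :
    deriv (fun x => a * exp (k * x) + b * exp (m * x)) =
      fun x => a * k * exp (k * x) + b * m * exp (m * x) :=
  funext fun x => ((hasDerivAt_mul_exp_mul a k x).add (hasDerivAt_mul_exp_mul b m x)).deriv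

theorem deriv_deriv_mul_exp_mul_add :
    deriv (deriv fun x => a * exp (k * x) + b * exp (m * x)) =
      fun x => a * k ^ 2 * exp (k * x) + b * m ^ 2 * exp (m * x) := by
  rw [deriv_mul_exp_mul_add, deriv_mul_exp_mul_add]
  funext x
  ring

theorem neg_deriv_deriv_mul_exp_mul_add (x : ℝ) :
    -deriv (deriv fun x => a * exp (k * x) + b * exp (m * x)) x +
        k ^ 2 * (a * exp (k * x) + b * exp (m * x)) =
      b * (k ^ 2 - m ^ 2) * exp (m * x) := by
  rw [deriv_deriv_mul_exp_mul_add]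
  ring

variable {a b k m}

theorem abs_mul_exp_mul_le {x : ℝ} (hk : 0 ≤ k) (hx : x ≤ 0) : |a * exp (k * x)| ≤ |a| := by
  rw [abs_mul, abs_of_pos (exp_pos _)]
  exact mul_le_of_le_one_right (abs_nonneg a)
    (exp_le_one_iff.mpr (mul_nonpos_of_nonneg_of_nonpos hk hx))

theorem abs_mul_exp_mul_add_le {x : ℝ} (hk : 0 ≤ k) (hm : 0 ≤ m) (hx : x ≤ 0) :
    |a * exp (k * x) + b * exp (m * x)| ≤ |a| + |b| :=
  (abs_add_le _ _).trans (add_le_add (abs_mul_exp_mul_le hk hx) (abs_mul_exp_mul_le hm hx))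

end ExpCombination

theorem stmt_14_general (G0 cB lam : ℝ) (hlam : 0 < lam)
    (l : ℕ)
    (p0i cti pti : ℝ → ℝ)
    (hp0i : p0i = fun x : ℝ =>
      G0 * cB / (lam * (Real.sqrt lam + 1)) * (1 - Real.exp (Real.sqrt lam * x)))
    (hcti : cti = fun x : ℝ =>
      -(Real.sqrt lam * cB / (Real.sqrt (lam + (l : ℝ) ^ 2) + Real.sqrt (1 + (l : ℝ) ^ 2))) *
        Real.exp (Real.sqrt (lam + (l : ℝ) ^ 2) * x))
    (hpti : pti = fun x : ℝ =>
      G0 * cB / Real.sqrt lam *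
        ((1 / (Real.sqrt lam + 1) -
            1 / (Real.sqrt (lam + (l : ℝ) ^ 2) + Real.sqrt (1 + (l : ℝ) ^ 2))) *
          Real.exp ((l : ℝ) * x) +
          Real.exp (Real.sqrt (lam + (l : ℝ) ^ 2) * x) /
            (Real.sqrt (lam + (l : ℝ) ^ 2) + Real.sqrt (1 + (l : ℝ) ^ 2)))) :
    (∀ x : ℝ, x ≤ 0 → -(deriv (deriv pti) x) + (l : ℝ) ^ 2 * pti x = G0 * cti x) ∧
    deriv p0i 0 + pti 0 = 0 ∧
    (∃ C : ℝ, ∀ x : ℝ, x ≤ 0 → |pti x| ≤ C) := by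
  set s := √lam
  set μ := √(lam + (l : ℝ) ^ 2)
  set ν := √(1 + (l : ℝ) ^ 2)
  have hs : 0 < s := sqrt_pos.mpr hlam
  have hs2 : s ^ 2 = lam := sq_sqrt hlam.le
  have hμ2 : μ ^ 2 = lam + (l : ℝ) ^ 2 := sq_sqrt (by positivity)
  have hμν : μ + ν ≠ 0 := by positivity
  set a := G0 * cB / s * (1 / (s + 1) - 1 / (μ + ν))
  set b := G0 * cB / s / (μ + ν)
  have hpti_exp : pti = fun x => a * exp (l * x) + b * exp (μ * x) := by
    rw [hpti]; funext x; ring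
  have hp0i_deriv : HasDerivAt p0i (-(G0 * cB / (lam * (s + 1))) * s * exp (s * 0)) 0 := by
    have hp0i_exp : p0i = fun x => G0 * cB / (lam * (s + 1)) +
        -(G0 * cB / (lam * (s + 1))) * exp (s * x) := by
      rw [hp0i]; funext x; ring
    rw [hp0i_exp]
    exact (hasDerivAt_mul_exp_mul _ s 0).const_add _
  refine ⟨fun x _ => ?_, ?_, ⟨|a| + |b|, fun x hx => ?_⟩⟩
  · rw [hpti_exp, hcti, neg_deriv_deriv_mul_exp_mul_add, hμ2, ← hs2]
    simp only [b]
    field_simp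
    ring
  · rw [hp0i_deriv.deriv, hpti_exp, ← hs2]
    simp only [a, b, mul_zero, exp_zero]
    field_simp
    ring
  · rw [hpti_exp]
    exact abs_mul_exp_mul_add_le (Nat.cast_nonneg l) (sqrt_nonneg _) hx

theorem stmt_14 (G0 cB lam : ℝ) (hG0 : 0 < G0) (hcB : 0 < cB) (hlam : 0 < lam)
    (l : ℕ) (hl : 1 ≤ l)
    (p0i cti pti : ℝ → ℝ)
    (hp0i : p0i = fun x : ℝ =>
      G0 * cB / (lam * (Real.sqrt lam + 1)) * (1 - Real.exp (Real.sqrt lam * x)))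
    (hcti : cti = fun x : ℝ =>
      -(Real.sqrt lam * cB / (Real.sqrt (lam + (l : ℝ) ^ 2) + Real.sqrt (1 + (l : ℝ) ^ 2))) *
        Real.exp (Real.sqrt (lam + (l : ℝ) ^ 2) * x))
    (hpti : pti = fun x : ℝ =>
      G0 * cB / Real.sqrt lam *
        ((1 / (Real.sqrt lam + 1) -
            1 / (Real.sqrt (lam + (l : ℝ) ^ 2) + Real.sqrt (1 + (l : ℝ) ^ 2))) *
          Real.exp ((l : ℝ) * x) +
          Real.exp (Real.sqrt (lam + (l : ℝ) ^ 2) * x) /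
            (Real.sqrt (lam + (l : ℝ) ^ 2) + Real.sqrt (1 + (l : ℝ) ^ 2)))) :
    (∀ x : ℝ, x ≤ 0 → -(deriv (deriv pti) x) + (l : ℝ) ^ 2 * pti x = G0 * cti x) ∧
    deriv p0i 0 + pti 0 = 0 ∧
    (∃ C : ℝ, ∀ x : ℝ, x ≤ 0 → |pti x| ≤ C) :=
  stmt_14_general G0 cB lam hlam l p0i cti pti hp0i hcti hpti
end

section
/- Fix λ > 0, an integer l ≥ 1, and constants G₀ > 0, c_B > 0. Let p₀ⁱ(x) = (G₀·c_B/(λ(√λ + 1)))·(1 − e^{√λ·x}) and p̃ⁱ(x) = (G₀·c_B/√λ)·((1/(√λ + 1) − 1/(√(λ + l²) + √(1 + l²)))·e^{l·x} + e^{√(λ + l²)·x}/(√(λ + l²) + √(1 + l²))). Then −(p₀ⁱ)''(0) − (p̃ⁱ)'(0) = (G₀·c_B/√λ)·((√λ − l)/(√λ + 1) + (l − √(λ + l²))/(√(λ + l²) + √(1 + l²))) = E(λ, l); that is, the first-order coefficient of the boundary normal velocity under a cos(ly) perturbation equals the boundary evolution function E(λ, l). -/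
lemma hasDerivAt_exp_mul (a x : ℝ) :
    HasDerivAt (fun x : ℝ => Real.exp (a * x)) (Real.exp (a * x) * a) x := by
  simpa using ((hasDerivAt_id x).const_mul a).exp

theorem stmt_15 (G0 cB lam : ℝ) (hG0 : 0 < G0) (hcB : 0 < cB) (hlam : 0 < lam)
    (l : ℕ) (hl : 1 ≤ l)
    (p0i pti : ℝ → ℝ)
    (hp0i : p0i = fun x : ℝ =>
      G0 * cB / (lam * (Real.sqrt lam + 1)) * (1 - Real.exp (Real.sqrt lam * x)))
    (hpti : pti = fun x : ℝ =>
      G0 * cB / Real.sqrt lam *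
        ((1 / (Real.sqrt lam + 1) -
            1 / (Real.sqrt (lam + (l : ℝ) ^ 2) + Real.sqrt (1 + (l : ℝ) ^ 2))) *
          Real.exp ((l : ℝ) * x) +
          Real.exp (Real.sqrt (lam + (l : ℝ) ^ 2) * x) /
            (Real.sqrt (lam + (l : ℝ) ^ 2) + Real.sqrt (1 + (l : ℝ) ^ 2)))) :
    -(deriv (deriv p0i) 0) - deriv pti 0 =
      (G0 * cB / Real.sqrt lam) *
        ((Real.sqrt lam - (l : ℝ)) / (Real.sqrt lam + 1) +
          ((l : ℝ) - Real.sqrt (lam + (l : ℝ) ^ 2)) /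
            (Real.sqrt (lam + (l : ℝ) ^ 2) + Real.sqrt (1 + (l : ℝ) ^ 2))) ∧
    -(deriv (deriv p0i) 0) - deriv pti 0 = E G0 cB lam (l : ℝ) := by
  have hu : 0 < Real.sqrt lam := Real.sqrt_pos.mpr hlam
  set u := Real.sqrt lam with hudef
  set s := Real.sqrt (lam + (l : ℝ) ^ 2) with hsdef
  set t := Real.sqrt (1 + (l : ℝ) ^ 2) with htdef
  have hu2 : u * u = lam := Real.mul_self_sqrt hlam.le
  have hs : 0 < s := Real.sqrt_pos.mpr (by positivity)
  have ht : 0 < t := Real.sqrt_pos.mpr (by positivity)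
  set c := G0 * cB / (lam * (u + 1)) with hc
  set k := G0 * cB / u with hk
  set A : ℝ := 1 / (u + 1) - 1 / (s + t) with hA
  -- first derivative of p0i
  have hd1 : deriv p0i = fun x => c * (-(Real.exp (u * x) * u)) := by
    funext x
    rw [hp0i]
    exact (((hasDerivAt_exp_mul u x).const_sub 1).const_mul c).deriv
  -- second derivative at 0
  have hd2 : deriv (deriv p0i) 0 = c * (-(Real.exp (u * 0) * u * u)) := by
    rw [hd1]
    exact ((((hasDerivAt_exp_mul u 0).mul_const u).neg).const_mul c).deriv
  -- derivative of pti at 0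
  have hd3 : deriv pti 0 =
      k * (A * (Real.exp ((l : ℝ) * 0) * (l : ℝ)) + Real.exp (s * 0) * s / (s + t)) := by
    rw [hpti]
    exact ((((hasDerivAt_exp_mul (l : ℝ) 0).const_mul A).add
      ((hasDerivAt_exp_mul s 0).div_const (s + t))).const_mul k).deriv
  rw [hd2, hd3]
  simp only [mul_zero, Real.exp_zero, one_mul]
  constructor
  · rw [hc, hk, hA]
    have h1 : u + 1 ≠ 0 := by positivity
    have h2 : s + t ≠ 0 := by positivity
    field_simp
    rw [← hu2]; ring
  · rw [hc, hk, hA]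
    show _ = (G0 * cB / u) * ((u - (l:ℝ)) / (u + 1) + ((l:ℝ) - s) / (s + t))
    have h1 : u + 1 ≠ 0 := by positivity
    have h2 : s + t ≠ 0 := by positivity
    field_simp
    rw [← hu2]; ring
end

section
/- Let n ≥ 1, m ≥ 1, G₀ > 0, c_B > 0, R₀ > 0, and C₀ ≥ G₀·c_B. Define R(t) = R₀·e^{C₀·t/n} and φ(x,t) = C₀·(R(t)² − |x|²)/(2n) for x ∈ ℝⁿ, t ≥ 0. Then for every t ≥ 0 and every x with |x| < R(t), the function φ satisfies the supersolution inequality ∂_t φ(x,t) − (m − 1)·φ(x,t)·(Δφ(x,t) + G₀·c_B) − |∇φ(x,t)|² ≥ 0; explicitly, Δφ = −C₀ ≤ −G₀·c_B, ∇φ(x,t) = −C₀·x/n, and ∂_t φ(x,t) = C₀·R(t)·R'(t)/n ≥ C₀²·|x|²/n² = |∇φ(x,t)|². -/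
/-!
The barrier is an explicit quadratic in `x`, so everything is computed in closed form:
`∇φ = -(C₀/n) x`, `Δφ = -C₀` and `∂ₜφ = (C₀/n)² R²`. Since `|x| < R(t)`, the time derivative
dominates `|∇φ|²`, while `φ ≥ 0`, `m ≥ 1` and `Δφ + G₀ c_B ≤ 0` make the porous-medium term
nonnegative.
-/

/-- The Laplacian of a scalar function on `ℝⁿ`, as the sum of second partial derivatives
along the coordinate directions. -/
noncomputable def laplacianE {n : ℕ} (f : EuclideanSpace ℝ (Fin n) → ℝ)
    (x : EuclideanSpace ℝ (Fin n)) : ℝ :=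
  ∑ i : Fin n,
    fderiv ℝ (fun y => fderiv ℝ f y (EuclideanSpace.single i 1)) x (EuclideanSpace.single i 1)

section QuadraticProfile

variable {E : Type*} [NormedAddCommGroup E] [InnerProductSpace ℝ E]

theorem hasFDerivAt_const_mul_sub_norm_sq (c a : ℝ) (x : E) :
    HasFDerivAt (fun y : E => c * (a - ‖y‖ ^ 2)) ((-(2 * c)) • innerSL ℝ x) x := by
  refine (((hasFDerivAt_const a x).sub (hasStrictFDerivAt_norm_sq x).hasFDerivAt).const_mul
    c).congr_fderiv ?_
  ext v
  simp [two_smul]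
  ring

theorem hasGradientAt_const_mul_sub_norm_sq [CompleteSpace E] (c a : ℝ) (x : E) :
    HasGradientAt (fun y : E => c * (a - ‖y‖ ^ 2)) ((-(2 * c)) • x) x := by
  rw [hasGradientAt_iff_hasFDerivAt]
  refine (hasFDerivAt_const_mul_sub_norm_sq c a x).congr_fderiv ?_
  ext v
  simp

end QuadraticProfile

theorem laplacianE_const_mul_sub_norm_sq {n : ℕ} (c a : ℝ) (x : EuclideanSpace ℝ (Fin n)) :
    laplacianE (fun y : EuclideanSpace ℝ (Fin n) => c * (a - ‖y‖ ^ 2)) x = -(2 * c) * n := by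
  have hsecond : ∀ i : Fin n,
      fderiv ℝ (fun y => ((-(2 * c)) • innerSL ℝ y) (EuclideanSpace.single i 1)) x
        (EuclideanSpace.single i 1) = -(2 * c) := by
    intro i
    have hlin : (fun y : EuclideanSpace ℝ (Fin n) =>
        ((-(2 * c)) • innerSL ℝ y) (EuclideanSpace.single i 1))
        = ⇑((-(2 * c)) • innerSL ℝ (EuclideanSpace.single i (1 : ℝ))) := by
      funext y
      simp [real_inner_comm]
    rw [hlin, ContinuousLinearMap.fderiv]
    simp
  simp only [laplacianE, fun y => (hasFDerivAt_const_mul_sub_norm_sq c a y).fderiv, hsecond,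
    Finset.sum_const, Finset.card_univ, Fintype.card_fin, nsmul_eq_mul]
  ring

theorem hasDerivAt_const_mul_exp_mul (a k t : ℝ) :
    HasDerivAt (fun s => a * Real.exp (k * s)) (k * (a * Real.exp (k * t))) t := by
  refine (((hasDerivAt_id t).const_mul k).exp.const_mul a).congr_deriv ?_
  simp only [id, mul_one]
  ring

theorem HasDerivAt.const_mul_sq_sub_div {R : ℝ → ℝ} {r t : ℝ} (hR : HasDerivAt R r t)
    (C b : ℝ) {k : ℝ} (hk : k ≠ 0) :
    HasDerivAt (fun s => C * (R s ^ 2 - b) / (2 * k)) (C * R t * r / k) t := by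
  refine (((hR.pow 2).sub_const b).const_mul C |>.div_const (2 * k)).congr_deriv ?_
  field_simp
  ring

theorem stmt_17_general (n : ℕ) (hn : 1 ≤ n) (m G0 cB R0 C0 : ℝ)
    (hm : 1 ≤ m) (hG0 : 0 < G0) (hcB : 0 < cB) (hC0 : G0 * cB ≤ C0)
    (R : ℝ → ℝ) (hR : R = fun t : ℝ => R0 * Real.exp (C0 * t / n))
    (φ : EuclideanSpace ℝ (Fin n) → ℝ → ℝ)
    (hφ : φ = fun (x : EuclideanSpace ℝ (Fin n)) (t : ℝ) =>
      C0 * (R t ^ 2 - ‖x‖ ^ 2) / (2 * n)) :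
    ∀ (t : ℝ), 0 ≤ t → ∀ (x : EuclideanSpace ℝ (Fin n)), ‖x‖ < R t →
      (0 ≤ deriv (fun s => φ x s) t -
          (m - 1) * φ x t * (laplacianE (fun y => φ y t) x + G0 * cB) -
          ‖gradient (fun y => φ y t) x‖ ^ 2) ∧
      laplacianE (fun y => φ y t) x = -C0 ∧
      -C0 ≤ -(G0 * cB) ∧
      gradient (fun y => φ y t) x = (-(C0 / n)) • x ∧
      deriv (fun s => φ x s) t = C0 * R t * deriv R t / n ∧
      C0 ^ 2 * ‖x‖ ^ 2 / n ^ 2 ≤ C0 * R t * deriv R t / n ∧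
      ‖gradient (fun y => φ y t) x‖ ^ 2 = C0 ^ 2 * ‖x‖ ^ 2 / n ^ 2 := by
  intro t _ x hx
  have hn0 : (n : ℝ) ≠ 0 := by positivity
  have hC0pos : 0 ≤ C0 := (mul_pos hG0 hcB).le.trans hC0
  have hRx : ‖x‖ ^ 2 ≤ R t ^ 2 := pow_le_pow_left₀ (norm_nonneg x) hx.le 2
  have hprofile : (fun y => φ y t) = fun y => C0 / (2 * n) * (R t ^ 2 - ‖y‖ ^ 2) := by
    subst hφ; funext y; ring
  have hRderiv : HasDerivAt R (C0 / n * R t) t := by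
    subst hR; simpa only [mul_div_right_comm] using hasDerivAt_const_mul_exp_mul R0 (C0 / n) t
  have hgrad : gradient (fun y => φ y t) x = (-(C0 / n)) • x := by
    rw [hprofile, (hasGradientAt_const_mul_sub_norm_sq _ _ x).gradient]
    field_simp
  have hlap : laplacianE (fun y => φ y t) x = -C0 := by
    rw [hprofile, laplacianE_const_mul_sub_norm_sq]
    field_simp
  have hdt : deriv (fun s => φ x s) t = C0 * R t * deriv R t / n := by
    subst hφ
    rw [hRderiv.deriv]
    exact (hRderiv.const_mul_sq_sub_div C0 (‖x‖ ^ 2) hn0).deriv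
  have hgradsq : ‖gradient (fun y => φ y t) x‖ ^ 2 = C0 ^ 2 * ‖x‖ ^ 2 / n ^ 2 := by
    rw [hgrad, norm_smul, Real.norm_eq_abs, abs_neg, mul_pow, sq_abs]
    ring
  have hdom : C0 ^ 2 * ‖x‖ ^ 2 / n ^ 2 ≤ C0 * R t * deriv R t / n := by
    calc C0 ^ 2 * ‖x‖ ^ 2 / n ^ 2 ≤ C0 ^ 2 * R t ^ 2 / n ^ 2 := by gcongr
      _ = C0 * R t * deriv R t / n := by rw [hRderiv.deriv]; field_simp
  have hφx : 0 ≤ φ x t := by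
    subst hφ; exact div_nonneg (mul_nonneg hC0pos (sub_nonneg.mpr hRx)) (by positivity)
  refine ⟨?_, hlap, by linarith, hgrad, hdt, hdom, hgradsq⟩
  rw [hlap, hgradsq, hdt]
  have hporous : 0 ≤ (m - 1) * φ x t * (C0 - G0 * cB) :=
    mul_nonneg (mul_nonneg (sub_nonneg.mpr hm) hφx) (sub_nonneg.mpr hC0)
  linarith

theorem stmt_17 (n : ℕ) (hn : 1 ≤ n) (m G0 cB R0 C0 : ℝ)
    (hm : 1 ≤ m) (hG0 : 0 < G0) (hcB : 0 < cB) (hR0 : 0 < R0) (hC0 : G0 * cB ≤ C0)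
    (R : ℝ → ℝ) (hR : R = fun t : ℝ => R0 * Real.exp (C0 * t / n))
    (φ : EuclideanSpace ℝ (Fin n) → ℝ → ℝ)
    (hφ : φ = fun (x : EuclideanSpace ℝ (Fin n)) (t : ℝ) =>
      C0 * (R t ^ 2 - ‖x‖ ^ 2) / (2 * n)) :
    ∀ (t : ℝ), 0 ≤ t → ∀ (x : EuclideanSpace ℝ (Fin n)), ‖x‖ < R t →
      (0 ≤ deriv (fun s => φ x s) t -
          (m - 1) * φ x t * (laplacianE (fun y => φ y t) x + G0 * cB) -
          ‖gradient (fun y => φ y t) x‖ ^ 2) ∧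
      laplacianE (fun y => φ y t) x = -C0 ∧
      -C0 ≤ -(G0 * cB) ∧
      gradient (fun y => φ y t) x = (-(C0 / n)) • x ∧
      deriv (fun s => φ x s) t = C0 * R t * deriv R t / n ∧
      C0 ^ 2 * ‖x‖ ^ 2 / n ^ 2 ≤ C0 * R t * deriv R t / n ∧
      ‖gradient (fun y => φ y t) x‖ ^ 2 = C0 ^ 2 * ‖x‖ ^ 2 / n ^ 2 :=
  stmt_17_general n hn m G0 cB R0 C0 hm hG0 hcB hC0 R hR φ hφ
end
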